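/- Let φ = a|00⟩ + b|11⟩ with a,b > 0, a² + b² = 1, and a² ∈ [1/2 − √5/6, 1/2 + √5/6]. Then the operator σ̃ = P_φ − (ab/3)(4P_{ψ₁} − 𝟙), where P_{ψ₁} projects onto (|00⟩+|11⟩)/√2, is a separable state, and it is the closest separable state to P_φ in Hilbert-Schmidt norm; consequently E_HS(P_φ) = 4a²b²/3. -/

import Mathlib

open Matrix ComplexOrder Kronecker

/-- Squared Hilbert-Schmidt norm: ‖A‖²_HS = tr(A*A). -/
noncomputable def hsNormSq {n : Type*} [Fintype n] (A : Matrix n n ℂ) : ℝ :=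
  (Aᴴ * A).trace.re

/-- A density matrix: positive semidefinite with trace 1. -/
def IsDensity {n : Type*} [Fintype n] [DecidableEq n] (ρ : Matrix n n ℂ) : Prop :=
  ρ.PosSemidef ∧ ρ.trace = 1

/-- A separable (disentangled) state: a finite convex combination of
tensor products of density matrices. -/
def IsSepState {m n : Type*} [Fintype m] [Fintype n] [DecidableEq m] [DecidableEq n]
    (ρ : Matrix (m × n) (m × n) ℂ) : Prop :=
  ∃ (k : ℕ) (p : Fin k → ℝ) (ρ₁ : Fin k → Matrix m m ℂ) (ρ₂ : Fin k → Matrix n n ℂ),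
    (∀ i, 0 ≤ p i) ∧ (∑ i, p i = 1) ∧ (∀ i, IsDensity (ρ₁ i)) ∧ (∀ i, IsDensity (ρ₂ i)) ∧
    ρ = ∑ i, (p i : ℂ) • ((ρ₁ i) ⊗ₖ (ρ₂ i))

/-- The rank-one projector |v⟩⟨v| onto a vector v. -/
noncomputable def proj {n : Type*} [Fintype n] (v : n → ℂ) : Matrix n n ℂ :=
  Matrix.vecMulVec v (star v)

/-- The four Bell vectors ψ₁,ψ₂,ψ₃,ψ₄ on ℂ²⊗ℂ². -/
noncomputable def bell (i : Fin 4) (p : Fin 2 × Fin 2) : ℂ :=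
  (((Real.sqrt 2 : ℝ) : ℂ))⁻¹ *
    (if i = 0 then (if p = (0, 0) then 1 else if p = (1, 1) then 1 else 0)
     else if i = 1 then (if p = (0, 0) then 1 else if p = (1, 1) then -1 else 0)
     else if i = 2 then (if p = (0, 1) then 1 else if p = (1, 0) then 1 else 0)
     else (if p = (0, 1) then 1 else if p = (1, 0) then -1 else 0))

/-- The vector φ = a|00⟩ + b|11⟩. -/
noncomputable def phiVec (a b : ℝ) : Fin 2 × Fin 2 → ℂ :=
  fun p => if p = (0, 0) then (a : ℂ) else if p = (1, 1) then (b : ℂ) else 0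

/-!
Write `W = 4 P_{ψ₁} - 𝟙` and `c = ab/3`, so that `σ̃ = P_φ - c W`. For density matrices `A`, `B`
one has `tr((A ⊗ B) W) = 2 ∑ᵢⱼ Aᵢⱼ Bᵢⱼ - 1 ≤ ‖A‖²_HS + ‖B‖²_HS - 1 ≤ 1`, so `tr(ρ W) ≤ 1` for
every separable `ρ`, while `tr(σ̃ W) = 1`. Expanding `‖ρ - P_φ‖²` around `σ̃`, the cross term is
`2c (tr(σ̃ W) - tr(ρ W)) ≥ 0`; hence `σ̃` is closest, at distance `c² ‖W‖² = 12 c²`.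

The matrix `σ̃` has diagonal `(a² - c, c, c, b² - c)` and a single coherence `c` between `|00⟩`
and `|11⟩`. Averaging the product states `(x, ω y) ⊗ (x, ω̄ y)` over `ω ∈ {1, i, -1, -i}` kills
every other coherence, and topping up with `|00⟩⟨00|` gives a separable decomposition as soon as
`c² ≤ (a² - c)(b² - c)`, i.e. `ab ≥ 1/3`, which is the hypothesis on `a²`.
-/

open Complex (I)

section HilbertSchmidt

variable {n : Type*} [Fintype n]

lemma hsNormSq_eq_sum_normSq (A : Matrix n n ℂ) :
    hsNormSq A = ∑ i, ∑ j, Complex.normSq (A i j) := by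
  simp only [hsNormSq, trace, diag, mul_apply, conjTranspose_apply, Complex.re_sum]
  rw [Finset.sum_comm]
  refine Finset.sum_congr rfl fun i _ => Finset.sum_congr rfl fun j _ => ?_
  simp [Complex.normSq_apply, Complex.mul_re]

lemma hsNormSq_nonneg (A : Matrix n n ℂ) : 0 ≤ hsNormSq A := by
  rw [hsNormSq_eq_sum_normSq]
  exact Finset.sum_nonneg fun i _ => Finset.sum_nonneg fun j _ => Complex.normSq_nonneg _

lemma hsNormSq_add (S T : Matrix n n ℂ) :
    hsNormSq (S + T) = hsNormSq S + hsNormSq T + 2 * (Tᴴ * S).trace.re := by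
  have hsymm : (Sᴴ * T).trace.re = (Tᴴ * S).trace.re := by
    rw [← conjTranspose_conjTranspose S, ← conjTranspose_mul, trace_conjTranspose,
      conjTranspose_conjTranspose, Complex.star_def, Complex.conj_re]
  simp only [hsNormSq, conjTranspose_add, add_mul, mul_add, trace_add, Complex.add_re, hsymm]
  ring

lemma hsNormSq_smul (c : ℝ) (A : Matrix n n ℂ) :
    hsNormSq ((c : ℂ) • A) = c ^ 2 * hsNormSq A := by
  simp [hsNormSq, conjTranspose_smul, trace_smul, pow_two, mul_assoc]

lemma re_sum_mul_le_hsNormSq (A B : Matrix n n ℂ) :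
    (∑ i, ∑ j, A i j * B i j).re ≤ (hsNormSq A + hsNormSq B) / 2 := by
  simp only [hsNormSq_eq_sum_normSq, Complex.re_sum, ← Finset.sum_add_distrib, Finset.sum_div]
  refine Finset.sum_le_sum fun i _ => Finset.sum_le_sum fun j _ => ?_
  simp only [Complex.mul_re, Complex.normSq_apply]
  nlinarith [sq_nonneg ((A i j).re - (B i j).re), sq_nonneg ((A i j).im + (B i j).im)]

lemma hsNormSq_sub_le_of_re_trace_mul_le {P ρ W : Matrix n n ℂ} {c : ℝ} (hc : 0 ≤ c) (hW : Wᴴ = W)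
    (hρ : (ρ * W).trace.re ≤ ((P - (c : ℂ) • W) * W).trace.re) :
    hsNormSq ((P - (c : ℂ) • W) - P) ≤ hsNormSq (ρ - P) := by
  set σ := P - (c : ℂ) • W
  have hcross : ((σ - P)ᴴ * (ρ - σ)).trace.re
      = c * ((σ * W).trace.re - (ρ * W).trace.re) := by
    rw [show σ - P = -((c : ℂ) • W) from sub_sub_cancel_left P _]
    simp [conjTranspose_smul, hW, mul_sub, trace_smul, trace_mul_comm W]
    ring
  have hsplit : ρ - P = (ρ - σ) + (σ - P) := by abel
  rw [hsplit, hsNormSq_add, hcross]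
  nlinarith [hsNormSq_nonneg (ρ - σ), mul_nonneg hc (sub_nonneg.2 hρ)]

variable [DecidableEq n]

lemma IsDensity.hsNormSq_le_one {ρ : Matrix n n ℂ} (hρ : IsDensity ρ) : hsNormSq ρ ≤ 1 := by
  obtain ⟨hpsd, htr⟩ := hρ
  set ev := hpsd.1.eigenvalues
  have hsum : ∑ i, ev i = 1 := by
    have h := congrArg Complex.re hpsd.1.trace_eq_sum_eigenvalues
    rw [htr] at h
    simpa [ev] using h.symm
  have hsq : hsNormSq ρ = ∑ i, ev i ^ 2 := by
    have h := hpsd.1.spectral_theorem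
    rw [hsNormSq, hpsd.1.eq]
    conv_lhs => rw [h, ← map_mul, diagonal_mul_diagonal, Unitary.conjStarAlgAut_apply,
      trace_mul_cycle, Unitary.coe_star_mul_self, one_mul, trace_diagonal]
    simp [pow_two, ev]
  have hle : ∀ i, ev i ≤ 1 := fun i =>
    hsum ▸ Finset.single_le_sum (fun j _ => hpsd.eigenvalues_nonneg j) (Finset.mem_univ i)
  rw [hsq, ← hsum]
  exact Finset.sum_le_sum fun i _ => by nlinarith [hpsd.eigenvalues_nonneg i, hle i]

end HilbertSchmidt

section Separable

variable {m n : Type*} [Fintype m] [Fintype n] [DecidableEq m] [DecidableEq n]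

lemma isDensity_proj {u : n → ℂ} (hu : star u ⬝ᵥ u = 1) : IsDensity (proj u) := by
  refine ⟨?_, by rw [proj, trace_vecMulVec, dotProduct_comm, hu]⟩
  rw [proj, vecMulVec_eq Unit, ← star_star u, ← conjTranspose_replicateRow, star_star]
  exact posSemidef_conjTranspose_mul_self _

lemma isSepState_sum_smul_proj_kronecker_proj {k : ℕ} (p : Fin k → ℝ) (u : Fin k → m → ℂ)
    (v : Fin k → n → ℂ) (hp : ∀ i, 0 ≤ p i) (hsum : ∑ i, p i = 1)
    (hu : ∀ i, star (u i) ⬝ᵥ u i = 1) (hv : ∀ i, star (v i) ⬝ᵥ v i = 1) :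
    IsSepState (∑ i, (p i : ℂ) • (proj (u i) ⊗ₖ proj (v i))) :=
  ⟨k, p, fun i => proj (u i), fun i => proj (v i), hp, hsum,
    fun i => isDensity_proj (hu i), fun i => isDensity_proj (hv i), rfl⟩

lemma IsSepState.re_trace_mul_le {ρ W : Matrix (m × n) (m × n) ℂ} {t : ℝ}
    (hρ : IsSepState ρ)
    (hW : ∀ A B, IsDensity A → IsDensity B → ((A ⊗ₖ B) * W).trace.re ≤ t) :
    (ρ * W).trace.re ≤ t := by
  obtain ⟨k, p, ρ₁, ρ₂, hp, hsum, hρ₁, hρ₂, rfl⟩ := hρ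
  calc (Finset.univ.sum (fun i => (p i : ℂ) • (ρ₁ i ⊗ₖ ρ₂ i)) * W).trace.re
      = ∑ i, p i * ((ρ₁ i ⊗ₖ ρ₂ i) * W).trace.re := by
        simp [Finset.sum_mul, trace_sum, Complex.re_sum, trace_smul]
    _ ≤ ∑ i, p i * t :=
        Finset.sum_le_sum fun i _ => mul_le_mul_of_nonneg_left (hW _ _ (hρ₁ i) (hρ₂ i)) (hp i)
    _ = t := by rw [← Finset.sum_mul, hsum, one_mul]

end Separable

lemma proj_bell_zero_apply (p q : Fin 2 × Fin 2) :
    proj (bell 0) p q = if p.1 = p.2 ∧ q.1 = q.2 then 1 / 2 else 0 := by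
  have hs : ((Real.sqrt 2 : ℝ) : ℂ) ^ 2 = 2 := by
    rw [← Complex.ofReal_pow, Real.sq_sqrt zero_le_two]; norm_num
  obtain ⟨i, j⟩ := p
  obtain ⟨k, l⟩ := q
  fin_cases i <;> fin_cases j <;> fin_cases k <;> fin_cases l <;>
    simp [proj, bell, vecMulVec, ← pow_two, Complex.conj_ofReal, hs]

noncomputable def bellWitness : Matrix (Fin 2 × Fin 2) (Fin 2 × Fin 2) ℂ :=
  (4 : ℂ) • proj (bell 0) - 1

lemma bellWitness_apply (p q : Fin 2 × Fin 2) :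
    bellWitness p q = (if p.1 = p.2 ∧ q.1 = q.2 then 2 else 0) - if p = q then 1 else 0 := by
  simp only [bellWitness, Matrix.sub_apply, Matrix.smul_apply, proj_bell_zero_apply, one_apply,
    smul_eq_mul]
  split_ifs <;> norm_num

lemma bellWitness_conjTranspose : bellWitnessᴴ = bellWitness := by
  ext p q
  simp only [conjTranspose_apply, bellWitness_apply, eq_comm (a := q), and_comm]
  split_ifs <;> simp

lemma hsNormSq_bellWitness : hsNormSq bellWitness = 12 := by
  simp [hsNormSq_eq_sum_normSq, bellWitness_apply, Fintype.sum_prod_type, Fin.sum_univ_two]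
  norm_num

lemma trace_kronecker_mul_bellWitness (A B : Matrix (Fin 2) (Fin 2) ℂ) :
    ((A ⊗ₖ B) * bellWitness).trace = 2 * ∑ i, ∑ j, A i j * B i j - A.trace * B.trace := by
  simp [trace, mul_apply, bellWitness_apply, Fintype.sum_prod_type, Fin.sum_univ_two]
  ring

lemma re_trace_kronecker_mul_bellWitness_le {A B : Matrix (Fin 2) (Fin 2) ℂ}
    (hA : IsDensity A) (hB : IsDensity B) : ((A ⊗ₖ B) * bellWitness).trace.re ≤ 1 := by
  rw [trace_kronecker_mul_bellWitness, hA.2, hB.2]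
  have hAB := re_sum_mul_le_hsNormSq A B
  generalize ∑ i, ∑ j, A i j * B i j = z at hAB ⊢
  simp only [one_mul, Complex.sub_re, Complex.mul_re, Complex.one_re]
  norm_num
  linarith [hA.hsNormSq_le_one, hB.hsNormSq_le_one]

-- In the basis `|00⟩, |01⟩, |10⟩, |11⟩`: diagonal `(α, γ, γ, β)`, plus `γ` at `(|00⟩, |11⟩)` and
-- `(|11⟩, |00⟩)`.
noncomputable def xState (α β γ : ℝ) : Matrix (Fin 2 × Fin 2) (Fin 2 × Fin 2) ℂ :=
  of fun p q =>
    if p = q then (if p = (0, 0) then α else if p = (1, 1) then β else γ)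
    else if p.1 = p.2 ∧ q.1 = q.2 then γ else 0

lemma proj_phiVec_sub_smul_bellWitness (a b : ℝ) :
    proj (phiVec a b) - ((a * b / 3 : ℝ) : ℂ) • bellWitness
      = xState (a ^ 2 - a * b / 3) (b ^ 2 - a * b / 3) (a * b / 3) := by
  ext ⟨i, j⟩ ⟨k, l⟩
  fin_cases i <;> fin_cases j <;> fin_cases k <;> fin_cases l <;>
    simp [proj, phiVec, xState, bellWitness_apply, vecMulVec, Complex.conj_ofReal] <;> ring

lemma trace_xState_mul_bellWitness (α β γ : ℝ) :
    (xState α β γ * bellWitness).trace = ((α + β + 2 * γ : ℝ) : ℂ) := by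
  simp [trace, mul_apply, xState, bellWitness_apply, Fintype.sum_prod_type, Fin.sum_univ_two]
  ring

noncomputable def phaseVec (x y : ℝ) : Fin 5 → Fin 2 → ℂ :=
  ![![x, y], ![x, I * y], ![x, -y], ![x, -I * y], ![1, 0]]

lemma sum_smul_proj_phaseVec_kronecker (x y s q : ℝ) :
    ∑ i, ((![s / 4, s / 4, s / 4, s / 4, q] i : ℝ) : ℂ) •
        (proj (phaseVec x y i) ⊗ₖ proj (star (phaseVec x y i)))
      = xState (s * x ^ 4 + q) (s * y ^ 4) (s * x ^ 2 * y ^ 2) := by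
  ext ⟨i, j⟩ ⟨k, l⟩
  fin_cases i <;> fin_cases j <;> fin_cases k <;> fin_cases l <;>
    simp [Fin.sum_univ_five, proj, phaseVec, xState, vecMulVec, Complex.conj_ofReal] <;>
    ring_nf <;> simp [Complex.I_sq] <;> ring

lemma star_phaseVec_dotProduct {x y : ℝ} (hxy : x ^ 2 + y ^ 2 = 1) (i : Fin 5) :
    star (phaseVec x y i) ⬝ᵥ phaseVec x y i = 1 := by
  have hxyC : (x : ℂ) ^ 2 + (y : ℂ) ^ 2 = 1 := by exact_mod_cast hxy
  fin_cases i <;> simp [phaseVec, dotProduct, Fin.sum_univ_two, Complex.conj_ofReal] <;>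
    first | linear_combination hxyC | linear_combination hxyC - (y : ℂ) ^ 2 * Complex.I_sq

lemma isSepState_xState {α β γ : ℝ} (hγ : 0 ≤ γ) (hβ : 0 < β) (hαβ : γ ^ 2 ≤ α * β)
    (htr : α + β + 2 * γ = 1) : IsSepState (xState α β γ) := by
  have hβγ : 0 < β + γ := by linarith
  set x := Real.sqrt (γ / (β + γ))
  set y := Real.sqrt (β / (β + γ))
  set s := (β + γ) ^ 2 / β
  set q := α - γ ^ 2 / β
  have hx : x ^ 2 = γ / (β + γ) := Real.sq_sqrt (by positivity)
  have hy : y ^ 2 = β / (β + γ) := Real.sq_sqrt (by positivity)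
  have hxy : x ^ 2 + y ^ 2 = 1 := by rw [hx, hy]; field_simp; ring
  have hq : 0 ≤ q := sub_nonneg.2 ((div_le_iff₀ hβ).2 (by linarith))
  have hdecomp : xState α β γ = xState (s * x ^ 4 + q) (s * y ^ 4) (s * x ^ 2 * y ^ 2) := by
    have h4 : ∀ t : ℝ, t ^ 4 = (t ^ 2) ^ 2 := fun t => by ring
    congr 1 <;> simp only [s, q, h4, hx, hy] <;> field_simp
    ring
  rw [hdecomp, ← sum_smul_proj_phaseVec_kronecker]
  refine isSepState_sum_smul_proj_kronecker_proj _ _ _ (fun i => ?_) ?_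
    (star_phaseVec_dotProduct hxy) (fun i => ?_)
  · fin_cases i <;> simp [hq] <;> positivity
  · have hsq : s + q = 1 := by
      simp only [s, q]
      field_simp
      linear_combination β * htr
    simp [Fin.sum_univ_five]
    linarith
  · rw [star_star, dotProduct_comm, star_phaseVec_dotProduct hxy]

lemma one_third_le_mul_of_sq_mem_Icc {a b : ℝ} (ha : 0 < a) (hb : 0 < b)
    (hab : a ^ 2 + b ^ 2 = 1)
    (hrange : a ^ 2 ∈ Set.Icc (1 / 2 - Real.sqrt 5 / 6) (1 / 2 + Real.sqrt 5 / 6)) :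
    1 / 3 ≤ a * b := by
  obtain ⟨hlo, hhi⟩ := hrange
  have h5 : Real.sqrt 5 ^ 2 = 5 := Real.sq_sqrt (by norm_num)
  have hdev : (a ^ 2 - 1 / 2) ^ 2 ≤ 5 / 36 := by nlinarith [Real.sqrt_nonneg 5]
  have hsq : 1 / 9 ≤ (a * b) ^ 2 := by nlinarith
  nlinarith [mul_pos ha hb]

theorem basepoint_of_pure_state (a b : ℝ) (ha : 0 < a) (hb : 0 < b)
    (hab : a ^ 2 + b ^ 2 = 1)
    (hrange : a ^ 2 ∈ Set.Icc (1 / 2 - Real.sqrt 5 / 6) (1 / 2 + Real.sqrt 5 / 6)) :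
    IsSepState (proj (phiVec a b)
        - ((a * b / 3 : ℝ) : ℂ) • ((4 : ℂ) • proj (bell 0) - 1))
    ∧ (∀ ρ, IsSepState ρ →
        hsNormSq ((proj (phiVec a b)
            - ((a * b / 3 : ℝ) : ℂ) • ((4 : ℂ) • proj (bell 0) - 1)) - proj (phiVec a b))
          ≤ hsNormSq (ρ - proj (phiVec a b)))
    ∧ hsNormSq ((proj (phiVec a b)
          - ((a * b / 3 : ℝ) : ℂ) • ((4 : ℂ) • proj (bell 0) - 1)) - proj (phiVec a b))
        = 4 * a ^ 2 * b ^ 2 / 3 := by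
  have hW : (4 : ℂ) • proj (bell 0) - 1 = bellWitness := rfl
  have hσ := proj_phiVec_sub_smul_bellWitness a b
  have hc : 0 ≤ a * b / 3 := by positivity
  have htr : (a ^ 2 - a * b / 3) + (b ^ 2 - a * b / 3) + 2 * (a * b / 3) = 1 := by linarith
  have hab3 := one_third_le_mul_of_sq_mem_Icc ha hb hab hrange
  have hβ : 0 < b ^ 2 - a * b / 3 := by nlinarith
  have hαβ : (a * b / 3) ^ 2 ≤ (a ^ 2 - a * b / 3) * (b ^ 2 - a * b / 3) := by nlinarith
  rw [hW]
  refine ⟨?_, fun ρ hρ => ?_, ?_⟩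
  · rw [hσ]
    exact isSepState_xState hc hβ hαβ htr
  · refine hsNormSq_sub_le_of_re_trace_mul_le hc bellWitness_conjTranspose ?_
    rw [hσ, trace_xState_mul_bellWitness, htr, Complex.ofReal_re]
    exact hρ.re_trace_mul_le fun A B => re_trace_kronecker_mul_bellWitness_le
  · rw [sub_sub_cancel_left, ← neg_smul, ← Complex.ofReal_neg, hsNormSq_smul,
      hsNormSq_bellWitness]
    ring
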